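/- For a local ring R, M₂(R) is strongly clean if and only if for every A ∈ M₂(R), either A is invertible, or I - A is invertible, or A is similar to a diagonal matrix. -/

import Mathlib

/-!
For an idempotent `E ∈ M₂(R)` over a local ring, one of `E₀₀`, `1 - E₀₀` is a unit. If `E₀₀` is,
conjugating by the matrix with columns `E e₀` and `e₁` turns `E` into `!![1, β; 0, δ]`, and a
unipotent conjugation then makes it `diag(1, δ)`; applying this to `E` or to `1 - E`, every
idempotent is similar to a diagonal matrix with entries in `{0, 1}`.

If `A = e + u` is a strongly clean decomposition, then either `e ∈ {0, 1}`, so that `A` or `1 - A`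
is a unit, or `e` is similar to `diag(1, 0)` or `diag(0, 1)`, whose centralisers consist of
diagonal matrices; as `A` commutes with `e`, it is diagonalisable. Conversely, units, elements `A`
with `1 - A` a unit and diagonal matrices over a local ring are strongly clean, and strong
cleanness is invariant under conjugation.
-/

def IsStronglyClean {S : Type*} [Ring S] (a : S) : Prop :=
  ∃ e u : S, IsIdempotentElem e ∧ IsUnit u ∧ a = e + u ∧ e * u = u * e

theorem IsLocalRing.eq_zero_or_one_of_isIdempotentElem {R : Type*} [Ring R] [IsLocalRing R]
    {e : R} (he : IsIdempotentElem e) : e = 0 ∨ e = 1 := by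
  rcases IsLocalRing.isUnit_or_isUnit_of_add_one (sub_add_cancel 1 e) with h | h
  · exact .inl (sub_eq_self.mp ((IsIdempotentElem.iff_eq_one_of_isUnit h).mp he.one_sub))
  · exact .inr ((IsIdempotentElem.iff_eq_one_of_isUnit h).mp he)

def Units.conjRingHom {S : Type*} [Semiring S] (P : Sˣ) : S →+* S :=
  MulSemiringAction.toRingHom (ConjAct Sˣ) S (ConjAct.toConjAct P)

@[simp]
theorem Units.conjRingHom_apply {S : Type*} [Semiring S] (P : Sˣ) (x : S) :
    P.conjRingHom x = P * x * ↑P⁻¹ :=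
  ConjAct.units_smul_def _ _

namespace IsStronglyClean

variable {S : Type*} [Ring S] {a : S}

theorem of_isUnit (h : IsUnit a) : IsStronglyClean a :=
  ⟨0, a, .zero, h, (zero_add a).symm, by simp⟩

theorem of_isUnit_one_sub (h : IsUnit (1 - a)) : IsStronglyClean a :=
  ⟨1, a - 1, .one, by simpa using h.neg, (add_sub_cancel 1 a).symm, by simp⟩

theorem map {T F : Type*} [Ring T] [FunLike F S T] [RingHomClass F S T] (f : F)
    (h : IsStronglyClean a) : IsStronglyClean (f a) := by
  obtain ⟨e, u, he, hu, rfl, hcomm⟩ := h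
  exact ⟨f e, f u, he.map f, hu.map f, map_add f e u, by rw [← map_mul, hcomm, map_mul]⟩

theorem units_conj (h : IsStronglyClean a) (P : Sˣ) : IsStronglyClean (↑P * a * ↑P⁻¹) := by
  simpa using h.map P.conjRingHom

theorem pi {ι : Type*} {M : ι → Type*} [∀ i, Ring (M i)] {a : ∀ i, M i}
    (h : ∀ i, IsStronglyClean (a i)) : IsStronglyClean a := by
  choose e u he hu hsum hcomm using h
  exact ⟨e, u, funext he, Pi.isUnit_iff.mpr hu, funext hsum, funext hcomm⟩

theorem diagonal {n : Type*} [Fintype n] [DecidableEq n] {d : n → S}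
    (h : ∀ i, IsStronglyClean (d i)) : IsStronglyClean (Matrix.diagonal d) :=
  (pi h).map (Matrix.diagonalRingHom n S)

end IsStronglyClean

theorem IsLocalRing.isStronglyClean {R : Type*} [Ring R] [IsLocalRing R] (a : R) :
    IsStronglyClean a :=
  (IsLocalRing.isUnit_or_isUnit_of_add_one (add_sub_cancel a 1)).elim
    IsStronglyClean.of_isUnit IsStronglyClean.of_isUnit_one_sub

namespace Matrix

variable {R : Type*} [Ring R]

theorem isDiag_of_commute_diagonal {n : Type*} [Fintype n] [DecidableEq n] {d : n → R}
    (hd : ∀ i, d i = 0 ∨ d i = 1) (hinj : Function.Injective d) {M : Matrix n n R}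
    (h : Commute (diagonal d) M) : M.IsDiag := by
  intro i j hij
  have hij' : d i * M i j = M i j * d j := by
    simpa only [diagonal_mul, mul_diagonal] using congrFun (congrFun h.eq i) j
  have hne : d i ≠ d j := hinj.ne hij
  rcases hd i with hi | hi <;> rcases hd j with hj | hj <;> simp_all

theorem exists_eq_conj_upperTriangular {E : Matrix (Fin 2) (Fin 2) R} (hE : IsIdempotentElem E)
    (ha : IsUnit (E 0 0)) :
    ∃ (P : (Matrix (Fin 2) (Fin 2) R)ˣ) (β δ : R),
      E = P.val * !![1, β; 0, δ] * (P⁻¹).val := by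
  let v : R := ↑ha.unit⁻¹
  -- The first column of `P` is the first column of `E`, which `E` fixes.
  let P : (Matrix (Fin 2) (Fin 2) R)ˣ :=
    ⟨!![E 0 0, 0; E 1 0, 1], !![v, 0; -(E 1 0 * v), 1], by simp [one_fin_two, v],
      by simp [one_fin_two, v, mul_assoc]⟩
  refine ⟨P, v * E 0 1, E 1 1 - E 1 0 * v * E 0 1, (Units.eq_mul_inv_iff_mul_eq P).mpr ?_⟩
  have hcol : ∀ k, E k 0 * E 0 0 + E k 1 * E 1 0 = E k 0 := fun k => by
    simpa [mul_apply, Fin.sum_univ_two] using congrFun (congrFun hE k) 0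
  ext i j
  fin_cases i <;> fin_cases j <;> simp [P, v, mul_apply, Fin.sum_univ_two, hcol, ← mul_assoc]

theorem exists_eq_conj_diagonal_of_isIdempotentElem_upperTriangular {β δ : R}
    (h : IsIdempotentElem !![1, β; 0, δ]) :
    ∃ P : (Matrix (Fin 2) (Fin 2) R)ˣ,
      !![1, β; 0, δ] = P.val * diagonal ![1, δ] * (P⁻¹).val := by
  have hβδ : β * δ = 0 := by simpa [mul_fin_two] using congrFun (congrFun h 0) 1
  refine ⟨⟨!![1, -β; 0, 1], !![1, β; 0, 1], by simp [one_fin_two], by simp [one_fin_two]⟩,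
    (Units.eq_mul_inv_iff_mul_eq _).mpr ?_⟩
  ext i j
  fin_cases i <;> fin_cases j <;> simp [mul_apply, Fin.sum_univ_two, hβδ]

theorem exists_eq_conj_diagonal_of_isUnit_apply_zero_zero {E : Matrix (Fin 2) (Fin 2) R}
    (hE : IsIdempotentElem E) (ha : IsUnit (E 0 0)) :
    ∃ (P : (Matrix (Fin 2) (Fin 2) R)ˣ) (d : Fin 2 → R), (∀ i, IsIdempotentElem (d i)) ∧
      E = P.val * diagonal d * (P⁻¹).val := by
  obtain ⟨P, β, δ, rfl⟩ := exists_eq_conj_upperTriangular hE ha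
  have hX : IsIdempotentElem !![1, β; 0, δ] := by
    simpa [mul_assoc] using hE.map P⁻¹.conjRingHom
  have hδ : δ * δ = δ := by simpa [mul_fin_two] using congrFun (congrFun hX 1) 1
  obtain ⟨Q, hQ⟩ := exists_eq_conj_diagonal_of_isIdempotentElem_upperTriangular hX
  refine ⟨P * Q, ![1, δ], Fin.forall_fin_two.2 ⟨.one, hδ⟩, ?_⟩
  simp [hQ, mul_assoc]

theorem exists_eq_conj_diagonal_of_isIdempotentElem [IsLocalRing R]
    {E : Matrix (Fin 2) (Fin 2) R} (hE : IsIdempotentElem E) :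
    ∃ (P : (Matrix (Fin 2) (Fin 2) R)ˣ) (d : Fin 2 → R), (∀ i, IsIdempotentElem (d i)) ∧
      E = P.val * diagonal d * (P⁻¹).val := by
  rcases IsLocalRing.isUnit_or_isUnit_of_add_one (sub_add_cancel 1 (E 0 0)) with h | h
  · obtain ⟨P, d, hd, hP⟩ :=
      exists_eq_conj_diagonal_of_isUnit_apply_zero_zero hE.one_sub (by simpa using h)
    refine ⟨P, 1 - d, fun i => (hd i).one_sub, ?_⟩
    have hD : diagonal (1 - d) = 1 - diagonal d := by rw [← diagonal_one, diagonal_sub]; rfl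
    rw [hD, mul_sub, sub_mul, mul_one, Units.mul_inv, ← hP, sub_sub_cancel]
  · exact exists_eq_conj_diagonal_of_isUnit_apply_zero_zero hE h

theorem isUnit_or_isUnit_one_sub_or_exists_diagonal_of_isStronglyClean [IsLocalRing R]
    {A : Matrix (Fin 2) (Fin 2) R} (hA : IsStronglyClean A) :
    IsUnit A ∨ IsUnit (1 - A) ∨
      ∃ (d : Fin 2 → R) (P : (Matrix (Fin 2) (Fin 2) R)ˣ),
        A = P.val * diagonal d * (P⁻¹).val := by
  obtain ⟨e, u, he, hu, hA, hcomm⟩ := hA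
  have heA : Commute e A := hA ▸ (Commute.refl e).add_right hcomm
  obtain ⟨P, d, hd, rfl⟩ := exists_eq_conj_diagonal_of_isIdempotentElem he
  replace hd : ∀ i, d i = 0 ∨ d i = 1 :=
    fun i => IsLocalRing.eq_zero_or_one_of_isIdempotentElem (hd i)
  by_cases hd01 : d 0 = d 1
  · rcases hd 0 with h0 | h1
    · have hd0 : d = 0 := funext (Fin.forall_fin_two.2 ⟨h0, hd01 ▸ h0⟩)
      left
      simpa [hA, hd0] using hu
    · have hd1 : d = 1 := funext (Fin.forall_fin_two.2 ⟨h1, hd01 ▸ h1⟩)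
      right; left
      simpa [hA, hd1] using hu.neg
  · right; right
    have hinj : Function.Injective d := by
      intro i j hij
      fin_cases i <;> fin_cases j <;> simp_all [eq_comm]
    have hconj : Commute (diagonal d) (P⁻¹.conjRingHom A) := by
      simpa [mul_assoc] using heA.map P⁻¹.conjRingHom
    refine ⟨(P⁻¹.conjRingHom A).diag, P, ?_⟩
    rw [(isDiag_of_commute_diagonal hd hinj hconj).diagonal_diag]
    simp [mul_assoc]

end Matrix

/-- For a local ring `R`, `M₂(R)` is strongly clean iff every `A ∈ M₂(R)` is invertible,
or `I - A` is invertible, or `A` is similar to a diagonal matrix. -/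
theorem matrix_two_stronglyClean_iff_diagonalizable {R : Type*} [Ring R] [IsLocalRing R] :
    (∀ A : Matrix (Fin 2) (Fin 2) R, IsStronglyClean A) ↔
      (∀ A : Matrix (Fin 2) (Fin 2) R, IsUnit A ∨ IsUnit (1 - A) ∨
        ∃ (d : Fin 2 → R) (P : (Matrix (Fin 2) (Fin 2) R)ˣ),
          A = P.val * Matrix.diagonal d * (P⁻¹).val) := by
  refine forall_congr' fun A =>
    ⟨Matrix.isUnit_or_isUnit_one_sub_or_exists_diagonal_of_isStronglyClean, ?_⟩
  rintro (hA | hA | ⟨d, P, rfl⟩)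
  · exact .of_isUnit hA
  · exact .of_isUnit_one_sub hA
  · exact (IsStronglyClean.diagonal fun i => IsLocalRing.isStronglyClean (d i)).units_conj P
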